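/- Let K be a totally real number field and let a, b ∈ K be totally positive and perfect with μ(a) = μ(b) = 1. Suppose there exists a nonzero c ∈ K admitting representations c = Σ_{x ∈ M(a)} λ_x x² and c = Σ_{y ∈ M(b)} ν_y y², where every coefficient λ_x (for every x ∈ M(a)) and every coefficient ν_y (for every y ∈ M(b)) is a strictly positive rational number. Then a = b. In particular, the interiors of the Voronoi cones of inequivalent perfect unary forms are disjoint. -/
import Mathlib


open NumberField Real

/-- An element of a number field is *totally positive* if it is positive under
every real embedding. -/
def TotPos {K : Type*} [Field K] (a : K) : Prop := ∀ φ : K →+* ℝ, 0 < φ a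

/-- The value of the trace form `Tr_{K/ℚ}(a x²)` at an algebraic integer `x`. -/
noncomputable def trForm {K : Type*} [Field K] [NumberField K] (a : K) (x : 𝓞 K) : ℚ :=
  Algebra.trace ℚ K (a * (x : K) ^ 2)

/-- `μ(a)`: the minimum of `Tr_{K/ℚ}(a x²)` over nonzero `x ∈ 𝓞 K`. -/
noncomputable def muMin {K : Type*} [Field K] [NumberField K] (a : K) : ℝ :=
  sInf {t : ℝ | ∃ x : 𝓞 K, x ≠ 0 ∧ (trForm a x : ℝ) = t}

/-- `M(a)`: the set of algebraic integers attaining `μ(a)`. -/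
def MinVecs {K : Type*} [Field K] [NumberField K] (a : K) : Set (𝓞 K) :=
  {x | ((trForm a x : ℚ) : ℝ) = muMin a}

/-- A totally positive `a` is *perfect* if it is the unique totally positive element `b`
with `Tr(b x²) = μ(a)` for all `x ∈ M(a)`. -/
def IsPerfectForm {K : Type*} [Field K] [NumberField K] (a : K) : Prop :=
  TotPos a ∧ ∀ b : K, TotPos b → (∀ x ∈ MinVecs a, ((trForm b x : ℚ) : ℝ) = muMin a) → b = a

/-- `a ~ a'` : equivalence by squares of units. -/
def UnitEquiv {K : Type*} [Field K] [NumberField K] (a a' : K) : Prop :=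
  ∃ u : (𝓞 K)ˣ, a' = a * ((u : 𝓞 K) : K) ^ 2

/-- Homothety: `a` and `b` are homothetic if `λ a ~ b` for some positive rational `λ`. -/
def Homothetic {K : Type*} [Field K] [NumberField K] (a b : K) : Prop :=
  ∃ q : ℚ, 0 < q ∧ UnitEquiv ((q : K) * a) b

/-- The number of homothety classes of perfect unary forms of `K`. -/
noncomputable def numClasses (K : Type*) [Field K] [NumberField K] : ℕ :=
  Nat.card (Quot (fun a b : {a : K // IsPerfectForm a} => Homothetic (a : K) (b : K)))

/-- `K` is `A`-reducible if minimal vectors of totally positive elements have norm at most `A`. -/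
def IsAReducible (K : Type*) [Field K] [NumberField K] (A : ℝ) : Prop :=
  ∀ a : K, TotPos a → ∀ x ∈ MinVecs a, |(Algebra.norm ℚ (x : K) : ℝ)| ≤ A

/-- `K` is totally real if every infinite place is real. -/
def TotallyReal (K : Type*) [Field K] [NumberField K] : Prop :=
  ∀ v : NumberField.InfinitePlace K, v.IsReal


section Aux

variable {K : Type*} [Field K] [NumberField K]

lemma trace_pos_of_totPos (htr : TotallyReal K) {z : K} (hz : TotPos z) :
    0 < Algebra.trace ℚ K z := by
  have hcast : (algebraMap ℚ ℂ) (Algebra.trace ℚ K z) = ∑ σ : K →ₐ[ℚ] ℂ, σ z :=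
    trace_eq_sum_embeddings (E := ℂ)
  have hterm : ∀ σ : K →ₐ[ℚ] ℂ, ∃ r : ℝ, 0 < r ∧ σ z = (r : ℂ) := by
    intro σ
    have hre : NumberField.ComplexEmbedding.IsReal (σ.toRingHom) :=
      NumberField.InfinitePlace.isReal_mk_iff.mp (htr (NumberField.InfinitePlace.mk σ.toRingHom))
    exact ⟨hre.embedding z, hz _,
      (NumberField.ComplexEmbedding.IsReal.coe_embedding_apply hre z).symm⟩
  choose r hr hσ using hterm
  have hC : ((Algebra.trace ℚ K z : ℚ) : ℂ) = ((∑ σ : K →ₐ[ℚ] ℂ, r σ : ℝ) : ℂ) := by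
    rw [show ((Algebra.trace ℚ K z : ℚ) : ℂ) = (algebraMap ℚ ℂ) (Algebra.trace ℚ K z) by
      norm_cast]
    rw [hcast]; push_cast
    exact Finset.sum_congr rfl fun σ _ => hσ σ
  have hR : ((Algebra.trace ℚ K z : ℚ) : ℝ) = ∑ σ : K →ₐ[ℚ] ℂ, r σ := by exact_mod_cast hC
  have hpos : 0 < ∑ σ : K →ₐ[ℚ] ℂ, r σ := by
    apply Finset.sum_pos (fun σ _ => hr σ)
    have : 0 < Fintype.card (K →ₐ[ℚ] ℂ) := by rw [AlgHom.card]; exact Module.finrank_pos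
    simpa [Finset.univ_nonempty_iff, ← Fintype.card_pos_iff] using this
  exact_mod_cast hR ▸ hpos

lemma trForm_pos (htr : TotallyReal K) {a : K} (ha : TotPos a) {x : 𝓞 K} (hx : x ≠ 0) :
    0 < trForm a x := by
  apply trace_pos_of_totPos htr
  intro φ
  have hxK : (x : K) ≠ 0 := by exact_mod_cast hx
  have : φ (x : K) ≠ 0 := fun h => hxK (φ.injective (by simpa using h))
  have h2 : 0 < φ ((x : K) ^ 2) := by rw [map_pow]; positivity
  rw [map_mul]
  exact mul_pos (ha φ) h2

lemma muMin_le_trForm (htr : TotallyReal K) {a : K} (ha : TotPos a) {x : 𝓞 K} (hx : x ≠ 0) :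
    muMin a ≤ ((trForm a x : ℚ) : ℝ) := by
  apply csInf_le
  · refine ⟨0, fun t ht => ?_⟩
    obtain ⟨y, hy, rfl⟩ := ht
    have := trForm_pos htr ha hy
    positivity
  · exact ⟨x, hx, rfl⟩

lemma zero_not_mem_minVecs {a : K} (hmu : muMin a = 1) : (0 : 𝓞 K) ∉ MinVecs a := by
  intro h
  have : ((trForm a (0 : 𝓞 K) : ℚ) : ℝ) = muMin a := h
  rw [hmu] at this
  simp [trForm] at this

lemma trace_mul_sum_eq (d : K) (s : Finset (𝓞 K)) (w : 𝓞 K → ℚ) :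
    Algebra.trace ℚ K (d * ∑ x ∈ s, ((w x : K) * ((x : K)) ^ 2)) =
      ∑ x ∈ s, w x * trForm d x := by
  rw [Finset.mul_sum, map_sum]
  refine Finset.sum_congr rfl fun x _ => ?_
  have h1 : d * ((w x : K) * ((x : K)) ^ 2) = (w x) • (d * ((x : K)) ^ 2) := by
    rw [Algebra.smul_def, eq_ratCast]; ring
  rw [h1, map_smul, smul_eq_mul, trForm]

end Aux

/-- If two perfect totally positive elements with minimum  have Voronoi
cones with intersecting interiors (witnessed by a common nonzero element with strictly
positive rational coefficients on both sets of minimal vectors), then they are equal. -/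
theorem eq_of_mem_interior_voronoi_cones
    (K : Type*) [Field K] [NumberField K] (htr : TotallyReal K)
    (a b : K) (ha : IsPerfectForm a) (hb : IsPerfectForm b)
    (hmua : muMin a = 1) (hmub : muMin b = 1)
    (c : K) (hc : c ≠ 0) (lam nu : 𝓞 K → ℚ)
    (hlam : ∀ x ∈ MinVecs a, 0 < lam x)
    (hnu : ∀ y ∈ MinVecs b, 0 < nu y)
    (hca : c = ∑ᶠ x ∈ MinVecs a, ((lam x : K) * ((x : K)) ^ 2))
    (hcb : c = ∑ᶠ y ∈ MinVecs b, ((nu y : K) * ((y : K)) ^ 2)) :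
    a = b := by
    classical
  -- nonmembership of 0
  have h0a : (0 : 𝓞 K) ∉ MinVecs a := zero_not_mem_minVecs hmua
  have h0b : (0 : 𝓞 K) ∉ MinVecs b := zero_not_mem_minVecs hmub
  -- supports
  have hsupA : MinVecs a ⊆ Function.support (fun x : 𝓞 K => (lam x : K) * ((x : K)) ^ 2) := by
    intro x hx
    have hx0 : x ≠ 0 := fun h => h0a (h ▸ hx)
    have hxK : (x : K) ≠ 0 := by exact_mod_cast hx0
    have hl : (lam x : K) ≠ 0 := by exact_mod_cast (hlam x hx).ne'
    simp only [Function.mem_support]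
    exact mul_ne_zero hl (pow_ne_zero _ hxK)
  have hsupB : MinVecs b ⊆ Function.support (fun y : 𝓞 K => (nu y : K) * ((y : K)) ^ 2) := by
    intro y hy
    have hy0 : y ≠ 0 := fun h => h0b (h ▸ hy)
    have hyK : (y : K) ≠ 0 := by exact_mod_cast hy0
    have hn : (nu y : K) ≠ 0 := by exact_mod_cast (hnu y hy).ne'
    simp only [Function.mem_support]
    exact mul_ne_zero hn (pow_ne_zero _ hyK)
  -- finiteness
  have hfinA : (MinVecs a).Finite := by
    by_contra h
    apply hc
    rw [hca]
    apply finsum_mem_eq_zero_of_infinite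
    rwa [Set.inter_eq_left.mpr hsupA]
  have hfinB : (MinVecs b).Finite := by
    by_contra h
    apply hc
    rw [hcb]
    apply finsum_mem_eq_zero_of_infinite
    rwa [Set.inter_eq_left.mpr hsupB]
  set sa := hfinA.toFinset with hsa
  set sb := hfinB.toFinset with hsb
  have hca' : c = ∑ x ∈ sa, ((lam x : K) * ((x : K)) ^ 2) := by
    rw [hca, finsum_mem_eq_finite_toFinset_sum _ hfinA]
  have hcb' : c = ∑ y ∈ sb, ((nu y : K) * ((y : K)) ^ 2) := by
    rw [hcb, finsum_mem_eq_finite_toFinset_sum _ hfinB]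
  -- trForm values on minimal vectors
  have hvalA : ∀ x ∈ MinVecs a, trForm a x = 1 := by
    intro x hx
    have : ((trForm a x : ℚ) : ℝ) = muMin a := hx
    rw [hmua] at this
    exact_mod_cast this
  have hvalB : ∀ y ∈ MinVecs b, trForm b y = 1 := by
    intro y hy
    have : ((trForm b y : ℚ) : ℝ) = muMin b := hy
    rw [hmub] at this
    exact_mod_cast this
  have hgeAB : ∀ y ∈ MinVecs b, 1 ≤ trForm a y := by
    intro y hy
    have hy0 : y ≠ 0 := fun h => h0b (h ▸ hy)
    have := muMin_le_trForm htr ha.1 hy0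
    rw [hmua] at this
    exact_mod_cast this
  have hgeBA : ∀ x ∈ MinVecs a, 1 ≤ trForm b x := by
    intro x hx
    have hx0 : x ≠ 0 := fun h => h0a (h ▸ hx)
    have := muMin_le_trForm htr hb.1 hx0
    rw [hmub] at this
    exact_mod_cast this
  -- trace computations
  have hmemA : ∀ x ∈ sa, x ∈ MinVecs a := fun x hx => hfinA.mem_toFinset.mp hx
  have hmemB : ∀ y ∈ sb, y ∈ MinVecs b := fun y hy => hfinB.mem_toFinset.mp hy
  have eq1 : Algebra.trace ℚ K (a * c) = ∑ x ∈ sa, lam x := by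
    rw [hca', trace_mul_sum_eq]
    exact Finset.sum_congr rfl fun x hx => by rw [hvalA x (hmemA x hx), mul_one]
  have eq2 : Algebra.trace ℚ K (b * c) = ∑ y ∈ sb, nu y := by
    rw [hcb', trace_mul_sum_eq]
    exact Finset.sum_congr rfl fun y hy => by rw [hvalB y (hmemB y hy), mul_one]
  have eq3 : Algebra.trace ℚ K (a * c) = ∑ y ∈ sb, nu y * trForm a y := by
    rw [hcb', trace_mul_sum_eq]
  have eq4 : Algebra.trace ℚ K (b * c) = ∑ x ∈ sa, lam x * trForm b x := by
    rw [hca', trace_mul_sum_eq]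
  have hge1 : ∑ y ∈ sb, nu y ≤ ∑ y ∈ sb, nu y * trForm a y := by
    apply Finset.sum_le_sum
    intro y hy
    have := hgeAB y (hmemB y hy)
    nlinarith [(hnu y (hmemB y hy))]
  have hge2 : ∑ x ∈ sa, lam x ≤ ∑ x ∈ sa, lam x * trForm b x := by
    apply Finset.sum_le_sum
    intro x hx
    have := hgeBA x (hmemA x hx)
    nlinarith [(hlam x (hmemA x hx))]
  -- equality of sums
  have hAB : ∑ y ∈ sb, nu y * trForm a y = ∑ y ∈ sb, nu y := by
    have h1 : ∑ y ∈ sb, nu y * trForm a y = ∑ x ∈ sa, lam x := by rw [← eq3, eq1]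
    have h2 : ∑ x ∈ sa, lam x * trForm b x = ∑ y ∈ sb, nu y := by rw [← eq4, eq2]
    linarith
  -- each term equal
  have hzero : ∑ y ∈ sb, nu y * (trForm a y - 1) = 0 := by
    have : ∑ y ∈ sb, nu y * (trForm a y - 1)
        = ∑ y ∈ sb, nu y * trForm a y - ∑ y ∈ sb, nu y := by
      rw [← Finset.sum_sub_distrib]
      exact Finset.sum_congr rfl fun y _ => by ring
    rw [this, hAB, sub_self]
  have hterm : ∀ y ∈ sb, nu y * (trForm a y - 1) = 0 := by
    rw [← Finset.sum_eq_zero_iff_of_nonneg]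
    · exact hzero
    · intro y hy
      have h1 := hgeAB y (hmemB y hy)
      have h2 := hnu y (hmemB y hy)
      nlinarith
  have hfinal : ∀ y ∈ MinVecs b, trForm a y = 1 := by
    intro y hy
    have hy' : y ∈ sb := hfinB.mem_toFinset.mpr hy
    have := hterm y hy'
    have h2 := (hnu y hy).ne'
    have : trForm a y - 1 = 0 := by
      rcases mul_eq_zero.mp this with h | h
      · exact absurd h h2
      · exact h
    linarith
  exact hb.2 a ha.1 fun y hy => by rw [hmub]; exact_mod_cast hfinal y hy
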